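/- Let L be an irreducible n×n Laplacian matrix and let Q = diag(q_1, …, q_n) be a real diagonal matrix. Then the function μ ↦ s(Q − μL) is convex on (0, ∞); moreover it is strictly convex on (0, ∞) (i.e., s(Q − (tμ_1 + (1−t)μ_2)L) < t·s(Q − μ_1 L) + (1−t)·s(Q − μ_2 L) for all distinct μ_1, μ_2 > 0 and t ∈ (0,1)) if and only if the q_i are not all equal. -/

import Mathlib

open Matrix Filter

/-- The spectral bound of a real square matrix: the maximum of the real parts of its
complex eigenvalues. -/
noncomputable def specBound {n : ℕ} (M : Matrix (Fin n) (Fin n) ℝ) : ℝ :=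
  sSup (Complex.re '' spectrum ℂ (M.map Complex.ofReal))

/-- The spectral radius of a real square matrix: the maximum of the absolute values of its
complex eigenvalues. -/
noncomputable def specRad {n : ℕ} (M : Matrix (Fin n) (Fin n) ℝ) : ℝ :=
  sSup ((fun z : ℂ => ‖z‖) '' spectrum ℂ (M.map Complex.ofReal))

/-- A matrix is irreducible if for every nonempty proper subset `S` of indices there are
`i ∉ S` and `j ∈ S` with `A i j ≠ 0`. -/
def MatIrreducible {n : ℕ} (A : Matrix (Fin n) (Fin n) ℝ) : Prop :=
  ∀ S : Finset (Fin n), S.Nonempty → S ≠ Finset.univ →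
    ∃ i ∉ S, ∃ j ∈ S, A i j ≠ 0

namespace PF

variable {n : ℕ}




/-- Metzler: off-diagonal entries nonnegative. -/
def Mz (M : Matrix (Fin n) (Fin n) ℝ) : Prop := ∀ i j, i ≠ j → 0 ≤ M i j

lemma irr_congr {A B : Matrix (Fin n) (Fin n) ℝ}
    (h : ∀ i j, i ≠ j → A i j ≠ 0 → B i j ≠ 0) (hA : MatIrreducible A) :
    MatIrreducible B := by
  intro S hS hS'
  obtain ⟨i, hi, j, hj, hij⟩ := hA S hS hS'
  exact ⟨i, hi, j, hj, h i j (fun he => hi (he ▸ hj)) hij⟩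

lemma irr_transpose {A : Matrix (Fin n) (Fin n) ℝ} (hA : MatIrreducible A) :
    MatIrreducible Aᵀ := by
  intro S hS hS'
  have h1 : (Sᶜ : Finset (Fin n)).Nonempty := by
    rw [← Finset.card_pos, Finset.card_compl]
    have : S.card < Fintype.card (Fin n) := by
      refine lt_of_le_of_ne (Finset.card_le_univ S) fun hc => hS' ?_
      exact Finset.eq_univ_of_card S (by simpa using hc)
    omega
  have h2 : (Sᶜ : Finset (Fin n)) ≠ Finset.univ := by
    obtain ⟨j, hj⟩ := hS
    intro he
    have : j ∈ (Sᶜ : Finset (Fin n)) := he ▸ Finset.mem_univ j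
    simp [Finset.mem_compl] at this; exact this hj
  obtain ⟨i, hi, j, hj, hij⟩ := hA Sᶜ h1 h2
  simp only [Finset.mem_compl, not_not] at hi hj
  exact ⟨j, hj, i, hi, by simpa [Matrix.transpose_apply] using hij⟩

lemma pow_entry_nonneg {A : Matrix (Fin n) (Fin n) ℝ} (hA : ∀ i j, 0 ≤ A i j) (k : ℕ) :
    ∀ i j, 0 ≤ (A ^ k) i j := by
  induction k with
  | zero => intro i j; by_cases h : i = j <;> simp [Matrix.one_apply, h]
  | succ m ih =>
    intro i j
    rw [pow_succ, Matrix.mul_apply]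
    exact Finset.sum_nonneg fun l _ => mul_nonneg (ih i l) (hA l j)

lemma one_add_pow_pos {A : Matrix (Fin n) (Fin n) ℝ} (hA : ∀ i j, 0 ≤ A i j)
    (hirr : MatIrreducible A) (i j : Fin n) : 0 < ((1 + A) ^ (n - 1)) i j := by
  set B : Matrix (Fin n) (Fin n) ℝ := 1 + A with hBdef
  have hB : ∀ a b, 0 ≤ B a b := by
    intro a b
    by_cases h : a = b
    · simp [hBdef, Matrix.add_apply, Matrix.one_apply, h]
      linarith [hA b b]
    · simp [hBdef, Matrix.add_apply, Matrix.one_apply, h]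
      exact hA a b
  have hBd : ∀ a, 1 ≤ B a a := by
    intro a; simp [hBdef, Matrix.add_apply, Matrix.one_apply]; linarith [hA a a]
  have hBpow : ∀ k a b, 0 ≤ (B ^ k) a b := fun k => pow_entry_nonneg hB k
  set S : ℕ → Finset (Fin n) := fun k => Finset.univ.filter (fun a => 0 < (B ^ k) a j) with hSdef
  have memS : ∀ k a, a ∈ S k ↔ 0 < (B ^ k) a j := by
    intro k a; simp [hSdef]
  have hstep : ∀ k a b, a ∈ S k → 0 < B b a → b ∈ S (k + 1) := by
    intro k a b ha hba
    rw [memS] at ha ⊢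
    rw [pow_succ', Matrix.mul_apply]
    have hterm : 0 < B b a * (B ^ k) a j := mul_pos hba ha
    have : B b a * (B ^ k) a j ≤ ∑ l, B b l * (B ^ k) l j :=
      Finset.single_le_sum (f := fun l => B b l * (B ^ k) l j)
        (fun l _ => mul_nonneg (hB b l) (hBpow k l j)) (Finset.mem_univ a)
    linarith
  have hmono : ∀ k, S k ⊆ S (k + 1) := by
    intro k a ha
    exact hstep k a a ha (lt_of_lt_of_le one_pos (hBd a))
  have hne : 0 < n := Fin.pos i
  have hj0 : j ∈ S 0 := by rw [memS]; simp [Matrix.one_apply]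
  have hcard : ∀ k, min (k + 1) n ≤ (S k).card := by
    intro k
    induction k with
    | zero =>
      have : 0 < (S 0).card := Finset.card_pos.2 ⟨j, hj0⟩
      omega
    | succ m ih =>
      by_cases hu : S m = Finset.univ
      · have : S (m + 1) = Finset.univ := Finset.eq_univ_of_card _ (le_antisymm
          (Finset.card_le_univ _) (by
            calc Fintype.card (Fin n) = (S m).card := by rw [hu]; simp
            _ ≤ (S (m+1)).card := Finset.card_le_card (hmono m)))
        rw [this, Finset.card_univ]
        simp [min_le_right]
      · have hSne : (S m).Nonempty := Finset.card_pos.1 (by omega)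
        obtain ⟨a, haS, b, hbS, hab⟩ := hirr (S m) hSne hu
        have haneb : a ≠ b := fun h => haS (h ▸ hbS)
        have hBa : 0 < B a b := by
          have := hA a b
          have : B a b = A a b := by simp [hBdef, Matrix.add_apply, Matrix.one_apply, haneb]
          rw [this]
          exact lt_of_le_of_ne (hA a b) (Ne.symm hab)
        have haS1 : a ∈ S (m + 1) := hstep m b a hbS hBa
        have hsub : insert a (S m) ⊆ S (m + 1) := by
          intro x hx
          rcases Finset.mem_insert.1 hx with h | h
          · exact h ▸ haS1
          · exact hmono m h
        have hci : (insert a (S m)).card = (S m).card + 1 := Finset.card_insert_of_notMem haS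
        have := Finset.card_le_card hsub
        have hlt : (S m).card < n := by
          rcases lt_or_eq_of_le (Finset.card_le_univ (S m)) with h | h
          · simpa using h
          · exact absurd (Finset.eq_univ_of_card _ (by simpa using h)) hu
        omega
  have huniv : S (n - 1) = Finset.univ := by
    apply Finset.eq_univ_of_card
    have := hcard (n - 1)
    have h2 := Finset.card_le_univ (S (n-1))
    simp at h2 ⊢
    omega
  have : i ∈ S (n - 1) := huniv ▸ Finset.mem_univ i
  exact (memS _ _).1 this

lemma perron_nonneg (hn : 0 < n) (A : Matrix (Fin n) (Fin n) ℝ) (hA : ∀ i j, 0 ≤ A i j)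
    (hpos : ∀ i j, 0 < ((1 + A) ^ (n - 1)) i j) :
    ∃ (θ : ℝ) (v : Fin n → ℝ), 0 ≤ θ ∧ (∀ i, 0 < v i) ∧ A *ᵥ v = θ • v := by
  haveI : Nonempty (Fin n) := ⟨⟨0, hn⟩⟩
  set K : ℝ := ∑ i, ∑ j, A i j with hK
  have hK0 : 0 ≤ K := Finset.sum_nonneg fun i _ => Finset.sum_nonneg fun j _ => hA i j
  set C : Set (ℝ × (Fin n → ℝ)) :=
    {p | (0 ≤ p.1 ∧ p.1 ≤ K) ∧ (∀ i, 0 ≤ p.2 i) ∧ (∑ i, p.2 i) = 1 ∧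
      ∀ i, p.1 * p.2 i ≤ ∑ j, A i j * p.2 j} with hC
  -- closedness
  have hclosed : IsClosed C := by
    rw [hC]
    simp only [Set.setOf_and, Set.setOf_forall]
    refine (((isClosed_le continuous_const continuous_fst).inter
        (isClosed_le continuous_fst continuous_const)).inter
      (((isClosed_iInter fun i => isClosed_le continuous_const
          ((continuous_apply i).comp continuous_snd)).inter
        ((isClosed_eq (by fun_prop) continuous_const).inter
        (isClosed_iInter fun i => isClosed_le
          (continuous_fst.mul ((continuous_apply i).comp continuous_snd))
          (by fun_prop))))))
  -- compactness
  have hsub : C ⊆ Set.Icc ((0 : ℝ), (fun _ => 0 : Fin n → ℝ)) (K, fun _ => 1) := by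
    rintro ⟨θ, v⟩ ⟨⟨h1, h2⟩, h3, h4, _⟩
    have hv1 : ∀ i, v i ≤ 1 := by
      intro i
      calc v i ≤ ∑ j, v j := Finset.single_le_sum (fun j _ => h3 j) (Finset.mem_univ i)
      _ = 1 := h4
    exact ⟨⟨h1, fun i => h3 i⟩, ⟨h2, fun i => hv1 i⟩⟩
  have hcomp : IsCompact C := (isCompact_Icc).of_isClosed_subset hclosed hsub
  -- nonempty
  have hne : C.Nonempty := by
    refine ⟨(0, fun _ => (n : ℝ)⁻¹), ⟨le_refl _, hK0⟩, fun i => by positivity, ?_, fun i => ?_⟩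
    · simp [Finset.sum_const, Finset.card_univ]
      field_simp
    · simp only [zero_mul]
      exact Finset.sum_nonneg fun j _ => mul_nonneg (hA i j) (by positivity)
  obtain ⟨p0, hp0, hmax⟩ := hcomp.exists_isMaxOn hne continuous_fst.continuousOn
  obtain ⟨⟨hθ0, hθK⟩, hv0, hvs, hve⟩ := hp0
  set θ := p0.1 with hθ
  set v := p0.2 with hv
  -- a positive coordinate of v
  have hvpos : ∃ j0, 0 < v j0 := by
    by_contra hcon
    push_neg at hcon
    have : ∑ i, v i = 0 := le_antisymm (Finset.sum_nonpos fun i _ => hcon i)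
      (Finset.sum_nonneg fun i _ => hv0 i)
    rw [hvs] at this; norm_num at this
  set Bm := (1 + A) ^ (n - 1) with hBm
  have hmv : ∀ (M : Matrix (Fin n) (Fin n) ℝ) (x : Fin n → ℝ) (i : Fin n),
      (M *ᵥ x) i = ∑ j, M i j * x j := by
    intro M x i; simp [Matrix.mulVec, dotProduct]
  have hmulpos : ∀ (x : Fin n → ℝ), (∀ i, 0 ≤ x i) → (∃ j0, 0 < x j0) →
      ∀ i, 0 < (Bm *ᵥ x) i := by
    rintro x hx ⟨j0, hj0⟩ i
    rw [hmv]
    have h1 : Bm i j0 * x j0 ≤ ∑ j, Bm i j * x j :=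
      Finset.single_le_sum (fun j _ => mul_nonneg (hpos i j).le (hx j)) (Finset.mem_univ j0)
    have h2 : 0 < Bm i j0 * x j0 := mul_pos (hpos i j0) hj0
    linarith
  have key : A *ᵥ v = θ • v := by
    by_contra hne2
    set z := A *ᵥ v - θ • v with hz
    have hz0 : ∀ i, 0 ≤ z i := by
      intro i
      have := hve i
      simp only [hz, Pi.sub_apply, Pi.smul_apply, smul_eq_mul, hmv]
      linarith
    have hzne : ∃ j0, 0 < z j0 := by
      have hz' : z ≠ 0 := sub_ne_zero.2 hne2
      obtain ⟨j0, hj0⟩ := Function.ne_iff.1 hz'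
      exact ⟨j0, lt_of_le_of_ne (hz0 j0) (by simpa [ne_comm] using hj0)⟩
    set w := Bm *ᵥ v with hw
    have hwpos : ∀ i, 0 < w i := hmulpos v hv0 hvpos
    set Bz := Bm *ᵥ z with hBz
    have hBzpos : ∀ i, 0 < Bz i := hmulpos z hz0 hzne
    have hcomm : A * Bm = Bm * A :=
      (((Commute.one_right A).add_right (Commute.refl A)).pow_right (n-1)).eq
    have hAw : A *ᵥ w = θ • w + Bz := by
      have h1 : A *ᵥ v = θ • v + z := by rw [hz]; abel
      calc A *ᵥ w = (A * Bm) *ᵥ v := by rw [hw, Matrix.mulVec_mulVec]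
      _ = (Bm * A) *ᵥ v := by rw [hcomm]
      _ = Bm *ᵥ (A *ᵥ v) := by rw [Matrix.mulVec_mulVec]
      _ = Bm *ᵥ (θ • v + z) := by rw [h1]
      _ = θ • (Bm *ᵥ v) + Bm *ᵥ z := by
        rw [Matrix.mulVec_add, Matrix.mulVec_smul]
      _ = θ • w + Bz := rfl
    set ε := Finset.univ.inf' Finset.univ_nonempty (fun i => Bz i / w i) with hε
    have hεpos : 0 < ε := by
      rw [hε, Finset.lt_inf'_iff]
      exact fun i _ => div_pos (hBzpos i) (hwpos i)
    have hεle : ∀ i, ε * w i ≤ Bz i := by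
      intro i
      have h0 : ε ≤ Bz i / w i := Finset.inf'_le _ (Finset.mem_univ i)
      calc ε * w i ≤ (Bz i / w i) * w i := mul_le_mul_of_nonneg_right h0 (hwpos i).le
      _ = Bz i := div_mul_cancel₀ _ (hwpos i).ne'
    set sw := ∑ i, w i with hsw
    have hswpos : 0 < sw := Finset.sum_pos (fun i _ => hwpos i) Finset.univ_nonempty
    set w' : Fin n → ℝ := fun i => w i / sw with hw'
    have hw'pos : ∀ i, 0 < w' i := fun i => div_pos (hwpos i) hswpos
    have hw'sum : ∑ i, w' i = 1 := by
      rw [hw']; rw [← Finset.sum_div]; field_simp; exact hsw.symm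
    have hineq : ∀ i, (θ + ε) * w' i ≤ ∑ j, A i j * w' j := by
      intro i
      have h1 : (θ + ε) * w i ≤ (A *ᵥ w) i := by
        have := hεle i
        have h2 : (A *ᵥ w) i = θ * w i + Bz i := by
          rw [hAw]; simp [Pi.add_apply, Pi.smul_apply]
        rw [h2]; ring_nf; linarith
      have h3 : ∑ j, A i j * w' j = (A *ᵥ w) i / sw := by
        rw [hmv, Finset.sum_div]
        exact Finset.sum_congr rfl fun j _ => by
          show A i j * (w j / sw) = A i j * w j / sw
          ring
      rw [h3]
      show (θ + ε) * (w i / sw) ≤ (A *ᵥ w) i / sw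
      rw [show (θ + ε) * (w i / sw) = ((θ + ε) * w i) / sw from by ring]
      gcongr
    have hK2 : θ + ε ≤ K := by
      have h1 : (θ + ε) = ∑ i, (θ + ε) * w' i := by
        rw [← Finset.mul_sum, hw'sum, mul_one]
      have h2 : ∑ i, (θ + ε) * w' i ≤ ∑ i, ∑ j, A i j * w' j :=
        Finset.sum_le_sum fun i _ => hineq i
      have h3 : ∀ i, ∑ j, A i j * w' j ≤ ∑ j, A i j := by
        intro i
        apply Finset.sum_le_sum
        intro j _
        have hwle : w' j ≤ 1 := by
          calc w' j ≤ ∑ l, w' l := Finset.single_le_sum (fun l _ => (hw'pos l).le)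
                (Finset.mem_univ j)
          _ = 1 := hw'sum
        nlinarith [hA i j]
      have h4 : ∑ i, ∑ j, A i j * w' j ≤ K := by
        rw [hK]; exact Finset.sum_le_sum fun i _ => h3 i
      linarith
    have hmem : ((θ + ε, w') : ℝ × (Fin n → ℝ)) ∈ C := by
      refine ⟨⟨show (0:ℝ) ≤ θ + ε by linarith, hK2⟩, fun i => (hw'pos i).le, hw'sum, fun i => hineq i⟩
    have hcontr : θ + ε ≤ θ := hmax hmem
    linarith
  refine ⟨θ, v, hθ0, ?_, key⟩
  -- positivity of v
  have hBv : Bm *ᵥ v = ((1 + θ) ^ (n - 1)) • v := by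
    have hind : ∀ k, ((1 + A) ^ k) *ᵥ v = ((1 + θ) ^ k) • v := by
      intro k
      induction k with
      | zero => simp
      | succ m ih =>
        have h1 : (1 + A) *ᵥ v = (1 + θ) • v := by
          rw [Matrix.add_mulVec, Matrix.one_mulVec, key]
          funext i; simp; ring
        calc ((1 + A) ^ (m+1)) *ᵥ v = ((1 + A) ^ m * (1 + A)) *ᵥ v := by rw [pow_succ]
        _ = ((1 + A) ^ m) *ᵥ ((1 + A) *ᵥ v) := by rw [Matrix.mulVec_mulVec]
        _ = ((1 + A) ^ m) *ᵥ ((1 + θ) • v) := by rw [h1]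
        _ = (1 + θ) • (((1 + A) ^ m) *ᵥ v) := by rw [Matrix.mulVec_smul]
        _ = ((1 + θ) ^ (m+1)) • v := by rw [ih, smul_smul, pow_succ]; ring_nf
    exact hind (n - 1)
  have hwpos : ∀ i, 0 < (Bm *ᵥ v) i := hmulpos v hv0 hvpos
  intro i
  have h1 := hwpos i
  rw [hBv] at h1
  simp only [Pi.smul_apply, smul_eq_mul] at h1
  have h2 : 0 < (1 + θ) ^ (n - 1) := pow_pos (by linarith) _
  nlinarith

lemma mem_spectrum_iff_exists (N : Matrix (Fin n) (Fin n) ℂ) (lam : ℂ) :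
    lam ∈ spectrum ℂ N ↔ ∃ w, w ≠ 0 ∧ N *ᵥ w = lam • w := by
  rw [spectrum.mem_iff, Matrix.isUnit_iff_isUnit_det, isUnit_iff_ne_zero, not_not,
    ← Matrix.exists_mulVec_eq_zero_iff]
  constructor
  · rintro ⟨w, hw, hw2⟩
    refine ⟨w, hw, ?_⟩
    have : (algebraMap ℂ (Matrix (Fin n) (Fin n) ℂ)) lam - N = lam • 1 - N := by
      rw [Algebra.algebraMap_eq_smul_one]
    rw [this, Matrix.sub_mulVec, Matrix.smul_mulVec, Matrix.one_mulVec] at hw2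
    rw [← sub_eq_zero]
    rw [sub_eq_zero] at hw2 ⊢
    exact hw2.symm
  · rintro ⟨w, hw, hw2⟩
    refine ⟨w, hw, ?_⟩
    rw [Algebra.algebraMap_eq_smul_one, Matrix.sub_mulVec, Matrix.smul_mulVec,
      Matrix.one_mulVec, hw2, sub_self]

lemma spectrum_transpose (M : Matrix (Fin n) (Fin n) ℂ) :
    spectrum ℂ Mᵀ = spectrum ℂ M := by
  ext lam
  rw [spectrum.mem_iff, spectrum.mem_iff, Matrix.isUnit_iff_isUnit_det,
    Matrix.isUnit_iff_isUnit_det]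
  have : (algebraMap ℂ (Matrix (Fin n) (Fin n) ℂ)) lam - Mᵀ
      = ((algebraMap ℂ (Matrix (Fin n) (Fin n) ℂ)) lam - M)ᵀ := by
    rw [Matrix.transpose_sub, Algebra.algebraMap_eq_smul_one, Matrix.transpose_smul,
      Matrix.transpose_one]
  rw [this, Matrix.det_transpose]

lemma map_mulVec_coe (M : Matrix (Fin n) (Fin n) ℝ) (v : Fin n → ℝ) (i : Fin n) :
    ((M.map Complex.ofReal) *ᵥ (fun j => (v j : ℂ))) i = ((M *ᵥ v) i : ℂ) := by
  simp only [Matrix.mulVec, dotProduct, Matrix.map_apply]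
  push_cast
  rfl

lemma re_le_of_left_eig {M : Matrix (Fin n) (Fin n) ℝ} (hMz : ∀ i j, i ≠ j → 0 ≤ M i j)
    {u : Fin n → ℝ} {r' : ℝ} (hu : ∀ i, 0 < u i) (hleft : Mᵀ *ᵥ u = r' • u)
    {lam : ℂ} (hlam : lam ∈ spectrum ℂ (M.map Complex.ofReal)) : lam.re ≤ r' := by
  classical
  obtain ⟨w, hw, heig⟩ := (mem_spectrum_iff_exists _ _).1 hlam
  set c : ℝ := ∑ i, |M i i| with hc
  have hcb : ∀ i, |M i i| ≤ c := fun i =>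
    Finset.single_le_sum (f := fun i => |M i i|) (fun j _ => abs_nonneg _) (Finset.mem_univ i)
  set A : Matrix (Fin n) (Fin n) ℝ := fun i j => M i j + if i = j then c else 0 with hA
  have hA0 : ∀ i j, 0 ≤ A i j := by
    intro i j
    by_cases h : i = j
    · subst h; simp [hA]
      have := hcb i
      have := abs_nonneg (M i i)
      cases abs_cases (M i i) with
      | inl hh => linarith [hh.1]
      | inr hh => linarith [hh.1]
    · simp [hA, h]; exact hMz i j h
  set m : Fin n → ℝ := fun i => ‖w i‖ with hm
  have hm0 : ∀ i, 0 ≤ m i := fun i => norm_nonneg _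
  have key : ∀ i, ‖lam + c‖ * m i ≤ ∑ j, A i j * m j := by
    intro i
    have h1 : (lam + c) * w i = ∑ j, (A i j : ℂ) * w j := by
      have h2 : ((M.map Complex.ofReal) *ᵥ w) i = lam * w i := by rw [heig]; simp
      simp only [Matrix.mulVec, dotProduct, Matrix.map_apply] at h2
      have e : ∀ j, (A i j : ℂ) * w j = (M i j : ℂ) * w j + (if i = j then (c:ℂ) * w j else 0) := by
        intro j
        rw [hA]
        by_cases h : i = j <;> simp [h] <;> push_cast <;> ring
      have : ∑ j, (A i j : ℂ) * w j = (∑ j, (M i j : ℂ) * w j) + (c : ℂ) * w i := by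
        rw [Finset.sum_congr rfl (fun j _ => e j), Finset.sum_add_distrib,
          Finset.sum_ite_eq Finset.univ i (fun j => (c:ℂ) * w j)]
        simp
      rw [this, h2]; ring
    calc ‖lam + c‖ * m i = ‖(lam + c) * w i‖ := by
          rw [norm_mul]
    _ = ‖∑ j, (A i j : ℂ) * w j‖ := by rw [h1]
    _ ≤ ∑ j, ‖(A i j : ℂ) * w j‖ := norm_sum_le _ _
    _ = ∑ j, A i j * m j := by
        refine Finset.sum_congr rfl fun j _ => ?_
        rw [norm_mul, Complex.norm_real, Real.norm_eq_abs, abs_of_nonneg (hA0 i j)]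
  -- multiply by u and sum
  have hsum : ‖lam + c‖ * (∑ i, u i * m i) ≤ (r' + c) * (∑ i, u i * m i) := by
    have h1 : ∑ i, u i * (‖lam + c‖ * m i) ≤ ∑ i, u i * (∑ j, A i j * m j) :=
      Finset.sum_le_sum fun i _ => mul_le_mul_of_nonneg_left (key i) (hu i).le
    have h2 : ∑ i, u i * (∑ j, A i j * m j) = ∑ j, (∑ i, A i j * u i) * m j := by
      simp only [Finset.mul_sum]
      rw [Finset.sum_comm]
      simp only [Finset.sum_mul]
      exact Finset.sum_congr rfl fun j _ => Finset.sum_congr rfl fun i _ => by ring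
    have h3 : ∀ j, ∑ i, A i j * u i = (r' + c) * u j := by
      intro j
      have h4 : (Mᵀ *ᵥ u) j = r' * u j := by rw [hleft]; simp
      simp only [Matrix.mulVec, dotProduct, Matrix.transpose_apply] at h4
      have e : ∀ x, A x j * u x = M x j * u x + (if x = j then c * u x else 0) := by
        intro x
        rw [hA]
        by_cases h : x = j <;> simp [h] <;> ring
      rw [Finset.sum_congr rfl (fun x _ => e x), Finset.sum_add_distrib,
        Finset.sum_ite_eq' Finset.univ j (fun x => c * u x), h4]
      simp
      ring
    calc ‖lam + c‖ * (∑ i, u i * m i)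
        = ∑ i, u i * (‖lam + c‖ * m i) := by
          rw [Finset.mul_sum]
          exact Finset.sum_congr rfl fun i _ => by ring
    _ ≤ ∑ i, u i * (∑ j, A i j * m j) := h1
    _ = ∑ j, (∑ i, A i j * u i) * m j := h2
    _ = ∑ j, ((r' + c) * u j) * m j := Finset.sum_congr rfl fun j _ => by rw [h3 j]
    _ = (r' + c) * (∑ j, u j * m j) := by
          rw [Finset.mul_sum]
          exact Finset.sum_congr rfl fun j _ => by ring
  have hS : 0 < ∑ i, u i * m i := by
    obtain ⟨j, hj⟩ := Function.ne_iff.1 hw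
    have hmj : 0 < m j := by
      simp only [hm]
      exact norm_pos_iff.2 hj
    have : 0 < u j * m j := mul_pos (hu j) hmj
    have hle : u j * m j ≤ ∑ i, u i * m i :=
      Finset.single_le_sum (fun i _ => mul_nonneg (hu i).le (hm0 i)) (Finset.mem_univ j)
    linarith
  have habs : ‖lam + c‖ ≤ r' + c := le_of_mul_le_mul_right (by linarith [hsum]) hS
  have hre : lam.re + c ≤ ‖lam + c‖ := by
    have := Complex.re_le_norm (lam + c)
    simpa using this
  linarith

lemma perron_metzler {M : Matrix (Fin n) (Fin n) ℝ} (hn : 0 < n)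
    (hMz : ∀ i j, i ≠ j → 0 ≤ M i j) (hirr : MatIrreducible M) :
    ∃ (r : ℝ) (v : Fin n → ℝ), (∀ i, 0 < v i) ∧ M *ᵥ v = r • v := by
  classical
  set c : ℝ := ∑ i, |M i i| with hc
  have hcb : ∀ i, |M i i| ≤ c := fun i =>
    Finset.single_le_sum (f := fun i => |M i i|) (fun j _ => abs_nonneg _) (Finset.mem_univ i)
  set A : Matrix (Fin n) (Fin n) ℝ := M + c • 1 with hA
  have hAe : ∀ i j, A i j = M i j + if i = j then c else 0 := by
    intro i j
    by_cases h : i = j <;>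
      simp [hA, Matrix.add_apply, Matrix.smul_apply, Matrix.one_apply, h]
  have hA0 : ∀ i j, 0 ≤ A i j := by
    intro i j
    rw [hAe]
    by_cases h : i = j
    · subst h; simp
      cases abs_cases (M i i) with
      | inl hh => linarith [hcb i, abs_nonneg (M i i)]
      | inr hh => linarith [hcb i]
    · simp [h]; exact hMz i j h
  have hairr : MatIrreducible A := by
    apply irr_congr (A := M) _ hirr
    intro i j hij hMij
    rw [hAe]; simp [hij]; exact hMij
  obtain ⟨θ, v, hθ0, hv, heig⟩ :=
    perron_nonneg hn A hA0 (fun i j => one_add_pow_pos hA0 hairr i j)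
  refine ⟨θ - c, v, hv, ?_⟩
  have : M *ᵥ v = A *ᵥ v - c • v := by
    rw [hA, Matrix.add_mulVec, Matrix.smul_mulVec, Matrix.one_mulVec]
    abel
  rw [this, heig, sub_smul]

lemma specBound_char {M : Matrix (Fin n) (Fin n) ℝ} (hn : 0 < n)
    (hMz : ∀ i j, i ≠ j → 0 ≤ M i j) (hirr : MatIrreducible M)
    {r : ℝ} {v : Fin n → ℝ} (hv : ∀ i, 0 < v i) (heig : M *ᵥ v = r • v) :
    specBound M = r ∧ (∀ lam ∈ spectrum ℂ (M.map Complex.ofReal), lam.re ≤ r) ∧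
      ∃ u : Fin n → ℝ, (∀ i, 0 < u i) ∧ Mᵀ *ᵥ u = r • u := by
  have hMzT : ∀ i j, i ≠ j → 0 ≤ Mᵀ i j := fun i j hij => hMz j i (Ne.symm hij)
  obtain ⟨r', u, hu, hleft⟩ := perron_metzler hn hMzT (irr_transpose hirr)
  have hmvT : (Mᵀ)ᵀ = M := Matrix.transpose_transpose M
  have hrr : r = r' := by
    have h1 : ∑ i, u i * (M *ᵥ v) i = r * ∑ i, u i * v i := by
      rw [heig, Finset.mul_sum]
      exact Finset.sum_congr rfl fun i _ => by simp; ring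
    have h2 : ∑ i, u i * (M *ᵥ v) i = r' * ∑ i, u i * v i := by
      have e1 : ∑ i, u i * (M *ᵥ v) i = ∑ j, (Mᵀ *ᵥ u) j * v j := by
        simp only [Matrix.mulVec, dotProduct, Matrix.transpose_apply,
          Finset.mul_sum, Finset.sum_mul]
        rw [Finset.sum_comm]
        exact Finset.sum_congr rfl fun j _ => Finset.sum_congr rfl fun i _ => by ring
      rw [e1, hleft, Finset.mul_sum]
      exact Finset.sum_congr rfl fun j _ => by simp; ring
    have hS : 0 < ∑ i, u i * v i :=
      Finset.sum_pos (fun i _ => mul_pos (hu i) (hv i)) ⟨⟨0, hn⟩, Finset.mem_univ _⟩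
    have := h1.symm.trans h2
    exact mul_right_cancel₀ (ne_of_gt hS) this
  have hleft' : Mᵀ *ᵥ u = r • u := by rw [hrr]; exact hleft
  have hub : ∀ lam ∈ spectrum ℂ (M.map Complex.ofReal), lam.re ≤ r :=
    fun lam hlam => re_le_of_left_eig hMz hu hleft' hlam
  have hmem : (r : ℂ) ∈ spectrum ℂ (M.map Complex.ofReal) := by
    rw [mem_spectrum_iff_exists]
    refine ⟨fun j => (v j : ℂ), ?_, ?_⟩
    · intro hcon
      have := congrFun hcon ⟨0, hn⟩
      simp only [Pi.zero_apply, Complex.ofReal_eq_zero] at this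
      exact (hv ⟨0, hn⟩).ne' this
    · funext i
      rw [map_mulVec_coe, heig]
      simp
  have hgreat : IsGreatest (Complex.re '' spectrum ℂ (M.map Complex.ofReal)) r := by
    constructor
    · exact ⟨(r : ℂ), hmem, by simp⟩
    · rintro x ⟨lam, hlam, rfl⟩
      exact hub lam hlam
  exact ⟨hgreat.csSup_eq, hub, u, hu, hleft'⟩

lemma dv_ineq {M : Matrix (Fin n) (Fin n) ℝ}
    (hMz : ∀ i j, i ≠ j → 0 ≤ M i j)
    {r : ℝ} {u v x : Fin n → ℝ} (hu : ∀ i, 0 < u i) (hv : ∀ i, 0 < v i) (hx : ∀ i, 0 < x i)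
    (hright : M *ᵥ v = r • v) (hleft : Mᵀ *ᵥ u = r • u) :
    r * ∑ i, u i * v i ≤ ∑ i, u i * v i * ((M *ᵥ x) i / x i) ∧
    (∑ i, u i * v i * ((M *ᵥ x) i / x i) = r * ∑ i, u i * v i →
      ∀ i j, i ≠ j → M i j ≠ 0 → x j * v i = x i * v j) := by
  classical
  set y : Fin n → ℝ := fun i => x i / v i with hy
  have hy0 : ∀ i, 0 < y i := fun i => div_pos (hx i) (hv i)
  set c : Fin n → Fin n → ℝ := fun i j => u i * M i j * v j with hc
  set E : Fin n → Fin n → ℝ :=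
    fun i j => y j / y i - 1 - (Real.log (y j) - Real.log (y i)) with hE
  have hE0 : ∀ i j, 0 ≤ E i j := by
    intro i j
    have h1 : Real.log (y j / y i) ≤ y j / y i - 1 :=
      Real.log_le_sub_one_of_pos (div_pos (hy0 j) (hy0 i))
    rw [Real.log_div (hy0 j).ne' (hy0 i).ne'] at h1
    simp only [hE]
    linarith
  have hcE0 : ∀ i j, 0 ≤ c i j * E i j := by
    intro i j
    by_cases h : i = j
    · subst h; simp [hE, div_self (hy0 i).ne']
    · exact mul_nonneg (mul_nonneg (mul_nonneg (hu i).le (hMz i j h)) (hv j).le) (hE0 i j)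
  -- identities
  have T1 : ∑ i, ∑ j, c i j * (y j / y i) = ∑ i, u i * v i * ((M *ᵥ x) i / x i) := by
    refine Finset.sum_congr rfl fun i _ => ?_
    have : ∀ j, c i j * (y j / y i) = (u i * v i / x i) * (M i j * x j) := by
      intro j
      have hvj := (hv j).ne'
      have hvi := (hv i).ne'
      have hxi := (hx i).ne'
      have hxj := (hx j).ne'
      simp only [hc, hy]
      field_simp
    rw [Finset.sum_congr rfl fun j _ => this j, ← Finset.mul_sum]
    simp only [Matrix.mulVec, dotProduct]
    have hxi := (hx i).ne'
    field_simp
  have hrow : ∀ i, ∑ j, c i j = r * (u i * v i) := by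
    intro i
    have : (M *ᵥ v) i = r * v i := by rw [hright]; simp
    simp only [Matrix.mulVec, dotProduct] at this
    simp only [hc]
    rw [show ∑ j, u i * M i j * v j = u i * ∑ j, M i j * v j from by
      rw [Finset.mul_sum]; exact Finset.sum_congr rfl fun j _ => by ring]
    rw [this]; ring
  have hcol : ∀ j, ∑ i, c i j = r * (u j * v j) := by
    intro j
    have : (Mᵀ *ᵥ u) j = r * u j := by rw [hleft]; simp
    simp only [Matrix.mulVec, dotProduct, Matrix.transpose_apply] at this
    simp only [hc]
    rw [show ∑ i, u i * M i j * v j = (∑ i, M i j * u i) * v j from by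
      rw [Finset.sum_mul]; exact Finset.sum_congr rfl fun i _ => by ring]
    rw [this]; ring
  have T2 : ∑ i, ∑ j, c i j = r * ∑ i, u i * v i := by
    rw [Finset.sum_congr rfl fun i _ => hrow i, Finset.mul_sum]
  have T3 : ∑ i, ∑ j, c i j * (Real.log (y j) - Real.log (y i)) = 0 := by
    have e1 : ∑ i, ∑ j, c i j * Real.log (y j) = r * ∑ j, u j * v j * Real.log (y j) := by
      rw [Finset.sum_comm]
      rw [Finset.sum_congr rfl fun j _ => show ∑ i, c i j * Real.log (y j)
          = r * (u j * v j * Real.log (y j)) from by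
        rw [← Finset.sum_mul, hcol j]; ring]
      rw [Finset.mul_sum]
    have e2 : ∑ i, ∑ j, c i j * Real.log (y i) = r * ∑ i, u i * v i * Real.log (y i) := by
      rw [Finset.sum_congr rfl fun i _ => show ∑ j, c i j * Real.log (y i)
          = r * (u i * v i * Real.log (y i)) from by
        rw [← Finset.sum_mul, hrow i]; ring]
      rw [Finset.mul_sum]
    have : ∑ i, ∑ j, c i j * (Real.log (y j) - Real.log (y i))
        = (∑ i, ∑ j, c i j * Real.log (y j)) - ∑ i, ∑ j, c i j * Real.log (y i) := by
      rw [← Finset.sum_sub_distrib]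
      refine Finset.sum_congr rfl fun i _ => ?_
      rw [← Finset.sum_sub_distrib]
      exact Finset.sum_congr rfl fun j _ => by ring
    rw [this, e1, e2, sub_self]
  have master : ∑ i, ∑ j, c i j * E i j
      = (∑ i, u i * v i * ((M *ᵥ x) i / x i)) - r * ∑ i, u i * v i := by
    have : ∑ i, ∑ j, c i j * E i j
        = (∑ i, ∑ j, c i j * (y j / y i)) - (∑ i, ∑ j, c i j)
          - ∑ i, ∑ j, c i j * (Real.log (y j) - Real.log (y i)) := by
      rw [← Finset.sum_sub_distrib, ← Finset.sum_sub_distrib]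
      refine Finset.sum_congr rfl fun i _ => ?_
      rw [← Finset.sum_sub_distrib, ← Finset.sum_sub_distrib]
      refine Finset.sum_congr rfl fun j _ => ?_
      simp only [hE]; ring
    rw [this, T1, T2, T3, sub_zero]
  have hsumpos : 0 ≤ ∑ i, ∑ j, c i j * E i j :=
    Finset.sum_nonneg fun i _ => Finset.sum_nonneg fun j _ => hcE0 i j
  constructor
  · linarith [master, hsumpos]
  · intro heq i j hij hMij
    have hzero : ∑ i, ∑ j, c i j * E i j = 0 := by rw [master, heq]; ring
    have hterm : c i j * E i j = 0 := by
      have h1 : ∀ i ∈ Finset.univ, (0:ℝ) ≤ ∑ j, c i j * E i j :=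
        fun i _ => Finset.sum_nonneg fun j _ => hcE0 i j
      have h2 : ∑ j, c i j * E i j = 0 :=
        (Finset.sum_eq_zero_iff_of_nonneg h1).1 hzero i (Finset.mem_univ i)
      exact (Finset.sum_eq_zero_iff_of_nonneg fun j _ => hcE0 i j).1 h2 j (Finset.mem_univ j)
    have hcpos : 0 < c i j := by
      have hMp : 0 < M i j := lt_of_le_of_ne (hMz i j hij) (Ne.symm hMij)
      simp only [hc]
      exact mul_pos (mul_pos (hu i) hMp) (hv j)
    have hEzero : E i j = 0 := by
      rcases mul_eq_zero.1 hterm with h | h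
      · exact absurd h hcpos.ne'
      · exact h
    -- E i j = 0 → y j = y i
    have hyy : y j = y i := by
      by_contra hne
      have hne1 : y j / y i ≠ 1 := by
        intro hcon
        exact hne ((div_eq_one_iff_eq (hy0 i).ne').1 hcon)
      have := Real.log_lt_sub_one_of_pos (div_pos (hy0 j) (hy0 i)) hne1
      rw [Real.log_div (hy0 j).ne' (hy0 i).ne'] at this
      simp only [hE] at hEzero
      linarith
    have h2 : x j / v j = x i / v i := hyy
    rw [div_eq_div_iff (hv j).ne' (hv i).ne'] at h2
    exact h2

lemma metzler_nuQL {L : Matrix (Fin n) (Fin n) ℝ} (hL_off : ∀ i j, i ≠ j → L i j ≤ 0)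
    (q : Fin n → ℝ) (ν : ℝ) : ∀ i j, i ≠ j → 0 ≤ (ν • Matrix.diagonal q - L) i j := by
  intro i j h
  simp only [Matrix.sub_apply, Matrix.smul_apply, Matrix.diagonal_apply_ne _ h, smul_eq_mul,
    mul_zero]
  linarith [hL_off i j h]

lemma irr_nuQL {L : Matrix (Fin n) (Fin n) ℝ} (hL_irr : MatIrreducible L)
    (q : Fin n → ℝ) (ν : ℝ) : MatIrreducible (ν • Matrix.diagonal q - L) := by
  apply irr_congr _ hL_irr
  intro i j hij hLij
  simp only [Matrix.sub_apply, Matrix.smul_apply, Matrix.diagonal_apply_ne _ hij, smul_eq_mul,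
    mul_zero, zero_sub, ne_eq, neg_eq_zero]
  exact hLij

lemma nuQL_shift {L : Matrix (Fin n) (Fin n) ℝ} (q : Fin n → ℝ) (a b : ℝ) (w : Fin n → ℝ)
    (i : Fin n) : ((a • Matrix.diagonal q - L) *ᵥ w) i
      = ((b • Matrix.diagonal q - L) *ᵥ w) i + (a - b) * (q i * w i) := by
  simp only [Matrix.sub_mulVec, Matrix.smul_mulVec, Pi.sub_apply, Pi.smul_apply,
    Matrix.mulVec_diagonal, smul_eq_mul]
  ring

lemma support_line (hn : 0 < n) {L : Matrix (Fin n) (Fin n) ℝ}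
    (hL_off : ∀ i j, i ≠ j → L i j ≤ 0) (hL_irr : MatIrreducible L) (q : Fin n → ℝ)
    {ν : ℝ} (hν : 0 < ν) :
    ∃ P G : ℝ, 0 < P ∧
      ∀ ν', 0 < ν' →
        (specBound (ν • Matrix.diagonal q - L) * P + (ν' - ν) * G
          ≤ specBound (ν' • Matrix.diagonal q - L) * P) ∧
        ((¬ ∀ i j, q i = q j) → ν' ≠ ν →
          specBound (ν • Matrix.diagonal q - L) * P + (ν' - ν) * G
          < specBound (ν' • Matrix.diagonal q - L) * P) := by
  classical
  set Mν := ν • Matrix.diagonal q - L with hMν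
  obtain ⟨r, v, hv, hright⟩ := perron_metzler hn (metzler_nuQL hL_off q ν) (irr_nuQL hL_irr q ν)
  obtain ⟨hspec, _, u, hu, hleft⟩ :=
    specBound_char hn (metzler_nuQL hL_off q ν) (irr_nuQL hL_irr q ν) hv hright
  refine ⟨∑ i, u i * v i, ∑ i, (u i * v i) * q i,
    Finset.sum_pos (fun i _ => mul_pos (hu i) (hv i)) ⟨⟨0, hn⟩, Finset.mem_univ _⟩,
    ?_⟩
  intro ν' hν'
  obtain ⟨r', x, hx, hright'⟩ :=
    perron_metzler hn (metzler_nuQL hL_off q ν') (irr_nuQL hL_irr q ν')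
  obtain ⟨hspec', _, _⟩ :=
    specBound_char hn (metzler_nuQL hL_off q ν') (irr_nuQL hL_irr q ν') hx hright'
  have hdv := dv_ineq (metzler_nuQL hL_off q ν) hu hv hx hright hleft
  have hcomp : ∀ i, u i * v i * ((Mν *ᵥ x) i / x i)
      = (u i * v i) * r' + (ν - ν') * ((u i * v i) * q i) := by
    intro i
    have h1 : (Mν *ᵥ x) i = r' * x i + (ν - ν') * (q i * x i) := by
      rw [hMν, nuQL_shift q ν ν' x i]
      have : ((ν' • Matrix.diagonal q - L) *ᵥ x) i = r' * x i := by rw [hright']; simp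
      rw [this]
    rw [h1]
    have hxi := (hx i).ne'
    rw [show (r' * x i + (ν - ν') * (q i * x i)) / x i = r' + (ν - ν') * q i from by
      field_simp]
    ring
  have hsum : ∑ i, u i * v i * ((Mν *ᵥ x) i / x i)
      = r' * (∑ i, u i * v i) + (ν - ν') * (∑ i, (u i * v i) * q i) := by
    rw [Finset.sum_congr rfl fun i _ => hcomp i, Finset.sum_add_distrib, ← Finset.sum_mul,
      ← Finset.mul_sum]
    ring
  rw [hspec, hspec']
  constructor
  · have := hdv.1
    rw [hsum] at this
    linarith
  · intro hq hνν
    by_contra hcon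
    push_neg at hcon
    have hEq : r * (∑ i, u i * v i) + (ν' - ν) * (∑ i, (u i * v i) * q i)
        = r' * (∑ i, u i * v i) := by
      have := hdv.1
      rw [hsum] at this
      linarith
    have hsumEq : ∑ i, u i * v i * ((Mν *ᵥ x) i / x i) = r * ∑ i, u i * v i := by
      rw [hsum]; linarith
    have hprop := hdv.2 hsumEq
    -- x is proportional to v
    set k0 : Fin n := ⟨0, hn⟩ with hk0
    have hconst : ∀ k, x k * v k0 = x k0 * v k := by
      intro k
      set S : Finset (Fin n) := Finset.univ.filter (fun k => x k * v k0 = x k0 * v k) with hS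
      have hk0S : k0 ∈ S := by simp [hS, mul_comm]
      by_cases hSu : S = Finset.univ
      · have : k ∈ S := hSu ▸ Finset.mem_univ k
        simpa [hS] using this
      · exfalso
        obtain ⟨i, hiS, j, hjS, hMij⟩ := irr_nuQL hL_irr q ν S ⟨k0, hk0S⟩ hSu
        have hij : i ≠ j := fun h => hiS (h ▸ hjS)
        have e2 : x j * v i = x i * v j := hprop i j hij hMij
        have e1 : x j * v k0 = x k0 * v j := by
          have := hjS; simp [hS] at this; exact this
        have : x i * v k0 = x k0 * v i := by
          have hvj := (hv j).ne'
          have h3 : (x i * v k0) * v j = (x k0 * v i) * v j := by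
            linear_combination v i * e1 - v k0 * e2
          exact mul_right_cancel₀ hvj h3
        exact hiS (by simp [hS, this])
    have hxv : ∀ k, x k = (x k0 / v k0) * v k := by
      intro k
      rw [div_mul_eq_mul_div, eq_div_iff (hv k0).ne']
      linarith [hconst k]
    -- v is an eigenvector of Mν' as well
    have heigv : ∀ i, ((ν' • Matrix.diagonal q - L) *ᵥ v) i = r' * v i := by
      intro i
      have ht : 0 < x k0 / v k0 := div_pos (hx k0) (hv k0)
      have h1 : ((ν' • Matrix.diagonal q - L) *ᵥ x) i = r' * x i := by rw [hright']; simp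
      have h2 : ∀ w1 w2 : Fin n → ℝ, (∀ k, w1 k = (x k0 / v k0) * w2 k) →
          ((ν' • Matrix.diagonal q - L) *ᵥ w1) i
            = (x k0 / v k0) * ((ν' • Matrix.diagonal q - L) *ᵥ w2) i := by
        intro w1 w2 hw
        simp only [Matrix.mulVec, dotProduct]
        rw [Finset.mul_sum]
        exact Finset.sum_congr rfl fun l _ => by rw [hw l]; ring
      have h3 := h2 x v hxv
      rw [h1, hxv i] at h3
      have := mul_left_cancel₀ ht.ne' (by linarith [h3] : (x k0 / v k0) * (r' * v i)
        = (x k0 / v k0) * (((ν' • Matrix.diagonal q - L) *ᵥ v) i))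
      linarith [this]
    -- conclude q is constant
    apply hq
    have hqc : ∀ i, q i = (r - r') / (ν - ν') := by
      intro i
      have h1 : (Mν *ᵥ v) i = r * v i := by rw [hright]; simp
      have h2 : (Mν *ᵥ v) i = r' * v i + (ν - ν') * (q i * v i) := by
        rw [hMν, nuQL_shift q ν ν' v i, heigv i]
      have h3 : (ν - ν') * (q i * v i) = (r - r') * v i := by linarith
      have hνν' : ν - ν' ≠ 0 := fun h => hνν (by linarith [sub_eq_zero.1 h])
      rw [eq_div_iff hνν']
      have := mul_right_cancel₀ (hv i).ne'
        (by linarith [h3] : (q i * (ν - ν')) * v i = (r - r') * v i)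
      linarith [this]
    intro i j
    rw [hqc i, hqc j]

-- Metzler and irreducibility for Q - μL
lemma metzler_QmuL {L : Matrix (Fin n) (Fin n) ℝ} (hL_off : ∀ i j, i ≠ j → L i j ≤ 0)
    (q : Fin n → ℝ) {μ : ℝ} (hμ : 0 ≤ μ) :
    ∀ i j, i ≠ j → 0 ≤ (Matrix.diagonal q - μ • L) i j := by
  intro i j h
  simp only [Matrix.sub_apply, Matrix.smul_apply, Matrix.diagonal_apply_ne _ h, smul_eq_mul]
  have := hL_off i j h
  nlinarith

lemma irr_QmuL {L : Matrix (Fin n) (Fin n) ℝ} (hL_irr : MatIrreducible L)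
    (q : Fin n → ℝ) {μ : ℝ} (hμ : μ ≠ 0) :
    MatIrreducible (Matrix.diagonal q - μ • L) := by
  apply irr_congr _ hL_irr
  intro i j hij hLij
  simp only [Matrix.sub_apply, Matrix.smul_apply, Matrix.diagonal_apply_ne _ hij, smul_eq_mul,
    zero_sub, ne_eq, neg_eq_zero]
  exact mul_ne_zero hμ hLij

lemma f_eq_perspective (hn : 0 < n) {L : Matrix (Fin n) (Fin n) ℝ}
    (hL_off : ∀ i j, i ≠ j → L i j ≤ 0) (hL_irr : MatIrreducible L) (q : Fin n → ℝ)
    {μ : ℝ} (hμ : 0 < μ) :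
    specBound (Matrix.diagonal q - μ • L)
      = μ * specBound ((1/μ) • Matrix.diagonal q - L) := by
  obtain ⟨r, v, hv, hright⟩ :=
    perron_metzler hn (metzler_nuQL hL_off q (1/μ)) (irr_nuQL hL_irr q (1/μ))
  obtain ⟨hspec, _, _⟩ :=
    specBound_char hn (metzler_nuQL hL_off q (1/μ)) (irr_nuQL hL_irr q (1/μ)) hv hright
  have hident : Matrix.diagonal q - μ • L = μ • ((1/μ) • Matrix.diagonal q - L) := by
    rw [smul_sub, smul_smul]
    rw [mul_one_div_cancel hμ.ne', one_smul]
  have heig2 : (Matrix.diagonal q - μ • L) *ᵥ v = (μ * r) • v := by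
    rw [hident, Matrix.smul_mulVec, hright, smul_smul]
  obtain ⟨hspec2, _, _⟩ :=
    specBound_char hn (metzler_QmuL hL_off q hμ.le) (irr_QmuL hL_irr q hμ.ne') hv heig2
  rw [hspec2, hspec]

-- arithmetic combination lemma
lemma persp_combine {hs hx hy P G a b x y : ℝ} (hP : 0 < P) (hxpos : 0 < x) (hypos : 0 < y)
    (ha : 0 ≤ a) (hb : 0 ≤ b) (hab : a + b = 1) (hμ : 0 < a*x + b*y)
    (h1 : hs * P + (1/x - 1/(a*x+b*y)) * G ≤ hx * P)
    (h2 : hs * P + (1/y - 1/(a*x+b*y)) * G ≤ hy * P) :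
    (a*x+b*y) * hs ≤ a * (x * hx) + b * (y * hy) := by
  set μ := a*x + b*y with hμdef
  have H1 : (a*x) * (hs * P + (1/x - 1/μ) * G) ≤ (a*x) * (hx * P) :=
    mul_le_mul_of_nonneg_left h1 (mul_nonneg ha hxpos.le)
  have H2 : (b*y) * (hs * P + (1/y - 1/μ) * G) ≤ (b*y) * (hy * P) :=
    mul_le_mul_of_nonneg_left h2 (mul_nonneg hb hypos.le)
  have key : (a*x) * (hs * P + (1/x - 1/μ) * G) + (b*y) * (hs * P + (1/y - 1/μ) * G)
      = μ * (hs * P) + (a + b - 1) * G := by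
    field_simp
    ring
  rw [hab] at key
  norm_num at key
  have hsum := add_le_add H1 H2
  simp only [one_div] at hsum
  rw [key] at hsum
  have hrhs : (a*x) * (hx * P) + (b*y) * (hy * P) = (a * (x * hx) + b * (y * hy)) * P := by
    ring
  rw [hrhs] at hsum
  have := le_of_mul_le_mul_right (by linarith : (μ * hs) * P ≤ (a * (x * hx) + b * (y * hy)) * P) hP
  exact this

lemma persp_combine_strict {hs hx hy P G a b x y : ℝ} (hP : 0 < P) (hxpos : 0 < x)
    (hypos : 0 < y) (ha : 0 < a) (hb : 0 < b) (hab : a + b = 1) (hμ : 0 < a*x + b*y)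
    (h1 : hs * P + (1/x - 1/(a*x+b*y)) * G < hx * P)
    (h2 : hs * P + (1/y - 1/(a*x+b*y)) * G ≤ hy * P) :
    (a*x+b*y) * hs < a * (x * hx) + b * (y * hy) := by
  set μ := a*x + b*y with hμdef
  have H1 : (a*x) * (hs * P + (1/x - 1/μ) * G) < (a*x) * (hx * P) :=
    (mul_lt_mul_iff_right₀ (mul_pos ha hxpos)).2 h1
  have H2 : (b*y) * (hs * P + (1/y - 1/μ) * G) ≤ (b*y) * (hy * P) :=
    mul_le_mul_of_nonneg_left h2 (mul_pos hb hypos).le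
  have key : (a*x) * (hs * P + (1/x - 1/μ) * G) + (b*y) * (hs * P + (1/y - 1/μ) * G)
      = μ * (hs * P) + (a + b - 1) * G := by
    field_simp
    ring
  rw [hab] at key
  norm_num at key
  have hsum := add_lt_add_of_lt_of_le H1 H2
  simp only [one_div] at hsum
  rw [key] at hsum
  have hrhs : (a*x) * (hx * P) + (b*y) * (hy * P) = (a * (x * hx) + b * (y * hy)) * P := by
    ring
  rw [hrhs] at hsum
  exact lt_of_mul_lt_mul_right (by linarith : (μ * hs) * P < (a * (x * hx) + b * (y * hy)) * P) hP.le

lemma f_const_of_qconst {L : Matrix (Fin n) (Fin n) ℝ}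
    (hL_off : ∀ i j, i ≠ j → L i j ≤ 0) (hL_col : ∀ j, ∑ i, L i j = 0)
    (hL_irr : MatIrreducible L) {q : Fin n → ℝ} (hq : ∀ i j, q i = q j) :
    ∃ C, ∀ μ : ℝ, 0 < μ → specBound (Matrix.diagonal q - μ • L) = C := by
  rcases Nat.eq_zero_or_pos n with hn | hn
  · subst hn
    refine ⟨specBound (Matrix.diagonal q), fun μ _ => ?_⟩
    congr 1
    funext i
    exact i.elim0
  · set k0 : Fin n := ⟨0, hn⟩ with hk0
    refine ⟨q k0, fun μ hμ => ?_⟩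
    set N := Matrix.diagonal q - μ • L with hN
    have hMzT : ∀ i j, i ≠ j → 0 ≤ Nᵀ i j := fun i j hij =>
      metzler_QmuL hL_off q hμ.le j i (Ne.symm hij)
    have hirrT : MatIrreducible Nᵀ := irr_transpose (irr_QmuL hL_irr q hμ.ne')
    have heig : Nᵀ *ᵥ (fun _ => (1:ℝ)) = q k0 • (fun _ => (1:ℝ)) := by
      funext i
      simp only [Matrix.mulVec, dotProduct, Matrix.transpose_apply, mul_one,
        Pi.smul_apply, smul_eq_mul]
      have e1 : ∑ j, N j i = ∑ j, ((Matrix.diagonal q) j i - μ * L j i) := by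
        refine Finset.sum_congr rfl fun j _ => ?_
        simp [hN, Matrix.sub_apply]
      have e2 : ∑ j, (Matrix.diagonal q) j i = q i := by
        simp only [Matrix.diagonal_apply]
        rw [Finset.sum_ite_eq' Finset.univ i q]
        simp
      rw [e1, Finset.sum_sub_distrib, ← Finset.mul_sum, hL_col i, e2, hq i k0]
      ring
    have hone : ∀ i : Fin n, 0 < (fun _ => (1:ℝ)) i := fun _ => one_pos
    obtain ⟨hs, _, _⟩ := specBound_char hn hMzT hirrT hone heig
    have htr : specBound N = specBound Nᵀ := by
      unfold specBound
      rw [show Nᵀ.map Complex.ofReal = (N.map Complex.ofReal)ᵀ from rfl, spectrum_transpose]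
    rw [htr, hs]

lemma not_strict_of_const {f : ℝ → ℝ} {C : ℝ} (hf : ∀ μ : ℝ, 0 < μ → f μ = C) :
    ¬ StrictConvexOn ℝ (Set.Ioi 0) f := by
  intro h
  have h1 : (1:ℝ) ∈ Set.Ioi (0:ℝ) := by norm_num
  have h2 : (2:ℝ) ∈ Set.Ioi (0:ℝ) := by norm_num
  have key := h.2 h1 h2 (by norm_num : (1:ℝ) ≠ 2) (by norm_num : (0:ℝ) < 1/2)
    (by norm_num : (0:ℝ) < 1/2) (by norm_num : (1:ℝ)/2 + 1/2 = 1)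
  rw [hf 1 one_pos, hf 2 two_pos] at key
  simp only [smul_eq_mul] at key
  have e : (1:ℝ)/2 * (1:ℝ) + (1:ℝ)/2 * (2:ℝ) = 3/2 := by norm_num
  rw [e, hf (3/2) (by norm_num)] at key
  linarith


end PF

/-- For an irreducible Laplacian matrix `L` and `Q = diagonal q`, the map
`μ ↦ s(Q - μL)` is convex on `(0,∞)`, and it is strictly convex on `(0,∞)` if and only if
the `q i` are not all equal. -/
theorem stmt3 {n : ℕ} (L : Matrix (Fin n) (Fin n) ℝ)
    (hL_off : ∀ i j, i ≠ j → L i j ≤ 0)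
    (hL_col : ∀ j, ∑ i, L i j = 0)
    (hL_irr : MatIrreducible L)
    (q : Fin n → ℝ) :
    ConvexOn ℝ (Set.Ioi 0)
      (fun μ : ℝ => specBound (Matrix.diagonal q - μ • L)) ∧
    (StrictConvexOn ℝ (Set.Ioi 0)
        (fun μ : ℝ => specBound (Matrix.diagonal q - μ • L)) ↔
      ¬ ∀ i j, q i = q j) := by
  by_cases hq : ∀ i j, q i = q j
  · obtain ⟨C, hC⟩ := PF.f_const_of_qconst hL_off hL_col hL_irr hq
    have hns := PF.not_strict_of_const hC
    constructor
    · refine ⟨convex_Ioi 0, fun x hx y hy a b ha hb hab => ?_⟩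
      have hx' : (0:ℝ) < x := hx
      have hy' : (0:ℝ) < y := hy
      simp only [smul_eq_mul]
      have hcomb : 0 < a*x + b*y := by
        rcases eq_or_lt_of_le ha with h | h
        · have hb1 : b = 1 := by linarith
          rw [← h, hb1]; simpa using hy'
        · have h1 := mul_pos h hx'
          nlinarith [mul_nonneg hb hy'.le]
      rw [hC x hx', hC y hy', hC _ hcomb]
      have : a*C + b*C = C := by rw [← add_mul, hab, one_mul]
      linarith
    · exact ⟨fun hs => (hns hs).elim, fun hcon => (hcon hq).elim⟩
  · have hqne := hq
    push_neg at hq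
    obtain ⟨i0, j0, hij0⟩ := hq
    have hn : 0 < n := i0.pos
    have core : ∀ x y a b : ℝ, 0 < x → 0 < y → 0 < a → 0 < b → a + b = 1 →
        (specBound (Matrix.diagonal q - (a*x+b*y) • L)
          ≤ a * specBound (Matrix.diagonal q - x • L)
            + b * specBound (Matrix.diagonal q - y • L))
        ∧ (x ≠ y → specBound (Matrix.diagonal q - (a*x+b*y) • L)
          < a * specBound (Matrix.diagonal q - x • L)
            + b * specBound (Matrix.diagonal q - y • L)) := by
      intro x y a b hx hy ha hb hab
      have hμ : 0 < a*x + b*y := by positivity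
      obtain ⟨P, G, hP, hsupp⟩ := PF.support_line hn hL_off hL_irr q (one_div_pos.2 hμ)
      have hfx := PF.f_eq_perspective hn hL_off hL_irr q hx
      have hfy := PF.f_eq_perspective hn hL_off hL_irr q hy
      have hfμ := PF.f_eq_perspective hn hL_off hL_irr q hμ
      have hx1 := (hsupp (1/x) (one_div_pos.2 hx)).1
      have hy1 := (hsupp (1/y) (one_div_pos.2 hy)).1
      constructor
      · rw [hfx, hfy, hfμ]
        exact PF.persp_combine hP hx hy ha.le hb.le hab hμ hx1 hy1
      · intro hxy
        have hxμ : x ≠ a*x+b*y := by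
          intro hcon
          apply hxy
          have : b * x = b * y := by nlinarith
          exact mul_left_cancel₀ hb.ne' this
        have hνx : (1:ℝ)/x ≠ 1/(a*x+b*y) := by
          intro hcon
          apply hxμ
          rw [div_eq_div_iff hx.ne' hμ.ne'] at hcon
          linarith
        have hx2 := (hsupp (1/x) (one_div_pos.2 hx)).2 hqne hνx
        rw [hfx, hfy, hfμ]
        exact PF.persp_combine_strict hP hx hy ha hb hab hμ hx2 hy1
    constructor
    · refine ⟨convex_Ioi 0, fun x hx y hy a b ha hb hab => ?_⟩
      have hx' : (0:ℝ) < x := hx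
      have hy' : (0:ℝ) < y := hy
      simp only [smul_eq_mul]
      rcases eq_or_lt_of_le ha with ha' | ha'
      · have hb1 : b = 1 := by linarith
        rw [← ha', hb1]
        norm_num
      rcases eq_or_lt_of_le hb with hb' | hb'
      · have ha1 : a = 1 := by linarith
        rw [← hb', ha1]
        norm_num
      · exact (core x y a b hx' hy' ha' hb' hab).1
    · refine ⟨fun _ => hqne, fun _ => ?_⟩
      refine ⟨convex_Ioi 0, fun x hx y hy hxy a b ha hb hab => ?_⟩
      have hx' : (0:ℝ) < x := hx
      have hy' : (0:ℝ) < y := hy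
      simp only [smul_eq_mul]
      exact (core x y a b hx' hy' ha hb hab).2 hxy
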